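/- arXiv:0812.2547 — 3 statements merged into one kernel-verified Lean document; each statement's English description precedes it below -/
import Mathlib

section
/- Let α : ℝ² → ℝ be smooth and A, B : ℝ → ℝ be smooth functions such that α_x(x,y) + α(x,y)²/2 = A(2x+y) and α_y(x,y) − α(x,y)²/2 = B(x+2y) for all (x,y). Then (A(2x+y) + B(x+2y))·α(x,y) = A′(2x+y) − B′(x+2y) for all (x,y). -/
noncomputable def pdx (g : ℝ × ℝ → ℝ) (p : ℝ × ℝ) : ℝ := deriv (fun t => g (t, p.2)) p.1
noncomputable def pdy (g : ℝ × ℝ → ℝ) (p : ℝ × ℝ) : ℝ := deriv (fun t => g (p.1, t)) p.2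

theorem stmt4 (α : ℝ × ℝ → ℝ) (hα : ContDiff ℝ (⊤ : ℕ∞) α)
    (A B : ℝ → ℝ) (hA : ContDiff ℝ (⊤ : ℕ∞) A) (hB : ContDiff ℝ (⊤ : ℕ∞) B)
    (h1 : ∀ x y : ℝ, pdx α (x, y) + α (x, y) ^ 2 / 2 = A (2 * x + y))
    (h2 : ∀ x y : ℝ, pdy α (x, y) - α (x, y) ^ 2 / 2 = B (x + 2 * y)) :
    ∀ x y : ℝ,
      (A (2 * x + y) + B (x + 2 * y)) * α (x, y)
        = deriv A (2 * x + y) - deriv B (x + 2 * y) := by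
  intro x y
  have hαd : Differentiable ℝ α := hα.differentiable (by simp)
  have hα' : ContDiff ℝ (⊤ : ℕ∞) (fderiv ℝ α) := hα.fderiv_right (by simp)
  have hα'd : Differentiable ℝ (fderiv ℝ α) := hα'.differentiable (by simp)
  have hpdx : ∀ a b : ℝ, pdx α (a, b) = fderiv ℝ α (a, b) (1, 0) := by
    intro a b
    have hline : HasDerivAt (fun t : ℝ => (t, b)) ((1 : ℝ), (0 : ℝ)) a :=
      (hasDerivAt_id a).prodMk (hasDerivAt_const a b)
    exact ((hαd (a, b)).hasFDerivAt.comp_hasDerivAt a hline).deriv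
  have hpdy : ∀ a b : ℝ, pdy α (a, b) = fderiv ℝ α (a, b) (0, 1) := by
    intro a b
    have hline : HasDerivAt (fun t : ℝ => (a, t)) ((0 : ℝ), (1 : ℝ)) b :=
      (hasDerivAt_const b a).prodMk (hasDerivAt_id b)
    exact ((hαd (a, b)).hasFDerivAt.comp_hasDerivAt b hline).deriv
  set L := fderiv ℝ (fderiv ℝ α) (x, y) with hL
  -- vertical line derivative
  have hliny : HasDerivAt (fun t : ℝ => (x, t)) ((0 : ℝ), (1 : ℝ)) y :=
    (hasDerivAt_const y x).prodMk (hasDerivAt_id y)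
  have hlinx : HasDerivAt (fun t : ℝ => (t, y)) ((1 : ℝ), (0 : ℝ)) x :=
    (hasDerivAt_id x).prodMk (hasDerivAt_const x y)
  have hαy : HasDerivAt (fun t : ℝ => α (x, t)) (fderiv ℝ α (x, y) (0, 1)) y :=
    (hαd (x, y)).hasFDerivAt.comp_hasDerivAt y hliny
  have hαx : HasDerivAt (fun t : ℝ => α (t, y)) (fderiv ℝ α (x, y) (1, 0)) x :=
    (hαd (x, y)).hasFDerivAt.comp_hasDerivAt x hlinx
  have hFy : HasDerivAt (fun t : ℝ => fderiv ℝ α (x, t)) (L (0, 1)) y :=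
    (hα'd (x, y)).hasFDerivAt.comp_hasDerivAt y hliny
  have hFx : HasDerivAt (fun t : ℝ => fderiv ℝ α (t, y)) (L (1, 0)) x :=
    (hα'd (x, y)).hasFDerivAt.comp_hasDerivAt x hlinx
  have hF1 : HasDerivAt (fun t : ℝ => fderiv ℝ α (x, t) (1, 0)) (L (0, 1) (1, 0)) y := by
    have := (ContinuousLinearMap.apply ℝ ℝ ((1 : ℝ), (0 : ℝ))).hasFDerivAt.comp_hasDerivAt y hFy
    exact this
  have hF2 : HasDerivAt (fun t : ℝ => fderiv ℝ α (t, y) (0, 1)) (L (1, 0) (0, 1)) x := by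
    have := (ContinuousLinearMap.apply ℝ ℝ ((0 : ℝ), (1 : ℝ))).hasFDerivAt.comp_hasDerivAt x hFx
    exact this
  have hsqy : HasDerivAt (fun t : ℝ => α (x, t) ^ 2 / 2)
      (α (x, y) * fderiv ℝ α (x, y) (0, 1)) y := by
    have this : HasDerivAt (fun t : ℝ => α (x, t) ^ 2 / 2) _ y := (hαy.pow 2).div_const 2
    convert this using 1
    ring
  have hsqx : HasDerivAt (fun t : ℝ => α (t, y) ^ 2 / 2)
      (α (x, y) * fderiv ℝ α (x, y) (1, 0)) x := by
    have this : HasDerivAt (fun t : ℝ => α (t, y) ^ 2 / 2) _ x := (hαx.pow 2).div_const 2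
    convert this using 1
    ring
  have hR1 : HasDerivAt (fun t : ℝ => A (2 * x + t)) (deriv A (2 * x + y)) y := by
    have hi : HasDerivAt (fun t : ℝ => 2 * x + t) 1 y := (hasDerivAt_id y).const_add (2 * x)
    have := HasDerivAt.comp y (hA.differentiable (by simp) (2 * x + y)).hasDerivAt hi
    rw [mul_one] at this
    exact this
  have hR2 : HasDerivAt (fun t : ℝ => B (t + 2 * y)) (deriv B (x + 2 * y)) x := by
    have hi : HasDerivAt (fun t : ℝ => t + 2 * y) 1 x := (hasDerivAt_id x).add_const (2 * y)
    have := HasDerivAt.comp x (hB.differentiable (by simp) (x + 2 * y)).hasDerivAt hi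
    rw [mul_one] at this
    exact this
  have E1 : L (0, 1) (1, 0) + α (x, y) * fderiv ℝ α (x, y) (0, 1) = deriv A (2 * x + y) := by
    have heq : (fun t : ℝ => fderiv ℝ α (x, t) (1, 0) + α (x, t) ^ 2 / 2)
        = fun t : ℝ => A (2 * x + t) := by
      funext t
      rw [← hpdx x t]
      exact h1 x t
    exact (heq ▸ (show HasDerivAt (fun t : ℝ => fderiv ℝ α (x, t) (1, 0) + α (x, t) ^ 2 / 2) _ y from hF1.add hsqy)).unique hR1
  have E2 : L (1, 0) (0, 1) - α (x, y) * fderiv ℝ α (x, y) (1, 0) = deriv B (x + 2 * y) := by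
    have heq : (fun t : ℝ => fderiv ℝ α (t, y) (0, 1) - α (t, y) ^ 2 / 2)
        = fun t : ℝ => B (t + 2 * y) := by
      funext t
      rw [← hpdy t y]
      exact h2 t y
    exact (heq ▸ (show HasDerivAt (fun t : ℝ => fderiv ℝ α (t, y) (0, 1) - α (t, y) ^ 2 / 2) _ x from hF2.sub hsqx)).unique hR2
  have hsymm : L (1, 0) (0, 1) = L (0, 1) (1, 0) :=
    second_derivative_symmetric (fun p => (hαd p).hasFDerivAt)
      ((hα'd (x, y)).hasFDerivAt) (1, 0) (0, 1)
  have hsum : fderiv ℝ α (x, y) (1, 0) + fderiv ℝ α (x, y) (0, 1)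
      = A (2 * x + y) + B (x + 2 * y) := by
    have e1 := h1 x y
    have e2 := h2 x y
    rw [hpdx x y] at e1
    rw [hpdy x y] at e2
    linarith
  linear_combination E1 - E2 + hsymm - α (x, y) * hsum
end

section
/- Let α : ℝ² → ℝ be smooth, A, B smooth functions of one variable with A(2x+y) + B(x+2y) ≠ 0 everywhere, and suppose α_x + α²/2 = A(2x+y) and α_y − α²/2 = B(x+2y). Then α(x,y) = (A′(2x+y) − B′(x+2y)) / (A(2x+y) + B(x+2y)) for all (x,y). -/
lemma hasDerivAt_fst' {E : Type*} [NormedAddCommGroup E] [NormedSpace ℝ E]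
    {g : ℝ × ℝ → E} (hg : Differentiable ℝ g) (x y : ℝ) :
    HasDerivAt (fun t => g (t, y)) (fderiv ℝ g (x, y) (1, 0)) x :=
  (hg (x, y)).hasFDerivAt.comp_hasDerivAt x ((hasDerivAt_id x).prodMk (hasDerivAt_const x y))

lemma hasDerivAt_snd' {E : Type*} [NormedAddCommGroup E] [NormedSpace ℝ E]
    {g : ℝ × ℝ → E} (hg : Differentiable ℝ g) (x y : ℝ) :
    HasDerivAt (fun t => g (x, t)) (fderiv ℝ g (x, y) (0, 1)) y :=
  (hg (x, y)).hasFDerivAt.comp_hasDerivAt y ((hasDerivAt_const y x).prodMk (hasDerivAt_id y))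

theorem stmt5 (α : ℝ × ℝ → ℝ) (hα : ContDiff ℝ (⊤ : ℕ∞) α)
    (A B : ℝ → ℝ) (hA : ContDiff ℝ (⊤ : ℕ∞) A) (hB : ContDiff ℝ (⊤ : ℕ∞) B)
    (hne : ∀ x y : ℝ, A (2 * x + y) + B (x + 2 * y) ≠ 0)
    (h1 : ∀ x y : ℝ, pdx α (x, y) + α (x, y) ^ 2 / 2 = A (2 * x + y))
    (h2 : ∀ x y : ℝ, pdy α (x, y) - α (x, y) ^ 2 / 2 = B (x + 2 * y)) :
    ∀ x y : ℝ,
      α (x, y) = (deriv A (2 * x + y) - deriv B (x + 2 * y))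
        / (A (2 * x + y) + B (x + 2 * y)) := by
  intro x y
  have hdiff : Differentiable ℝ α := hα.differentiable (by simp)
  have hf' : Differentiable ℝ (fderiv ℝ α) :=
    (hα.fderiv_right (m := 1) (WithTop.coe_le_coe.mpr le_top)).differentiable (by simp)
  -- partial derivatives as fderiv
  have hpdx : ∀ u v : ℝ, pdx α (u, v) = fderiv ℝ α (u, v) (1, 0) := fun u v =>
    (hasDerivAt_fst' hdiff u v).deriv
  have hpdy : ∀ u v : ℝ, pdy α (u, v) = fderiv ℝ α (u, v) (0, 1) := fun u v =>
    (hasDerivAt_snd' hdiff u v).deriv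
  set a := α (x, y) with ha
  set ax := fderiv ℝ α (x, y) (1, 0) with hax
  set ay := fderiv ℝ α (x, y) (0, 1) with hay
  -- second derivative, evaluated
  have hΦ1 : HasDerivAt (fun t => fderiv ℝ α (x, t) (1, 0))
      (fderiv ℝ (fderiv ℝ α) (x, y) (0, 1) (1, 0)) y :=
    (ContinuousLinearMap.apply ℝ ℝ ((1 : ℝ), (0 : ℝ))).hasFDerivAt.comp_hasDerivAt y
      (hasDerivAt_snd' hf' x y)
  have hΦ2 : HasDerivAt (fun t => fderiv ℝ α (t, y) (0, 1))
      (fderiv ℝ (fderiv ℝ α) (x, y) (1, 0) (0, 1)) x :=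
    (ContinuousLinearMap.apply ℝ ℝ ((0 : ℝ), (1 : ℝ))).hasFDerivAt.comp_hasDerivAt x
      (hasDerivAt_fst' hf' x y)
  -- rewrite the functions using h1, h2
  have hfun1 : (fun t => fderiv ℝ α (x, t) (1, 0))
      = fun t => A (2 * x + t) - α (x, t) ^ 2 / 2 := by
    funext t
    have := h1 x t
    rw [hpdx x t] at this
    linarith
  have hfun2 : (fun t => fderiv ℝ α (t, y) (0, 1))
      = fun t => B (t + 2 * y) + α (t, y) ^ 2 / 2 := by
    funext t
    have := h2 t y
    rw [hpdy t y] at this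
    linarith
  rw [hfun1] at hΦ1
  rw [hfun2] at hΦ2
  -- derivatives of the right hand sides
  have hA' : HasDerivAt (fun t => A (2 * x + t)) (deriv A (2 * x + y)) y := by
    have h0 : HasDerivAt (fun t : ℝ => 2 * x + t) 1 y := by
      exact (hasDerivAt_id' y).const_add (2 * x)
    exact ((hA.differentiable (by simp) (2 * x + y)).hasDerivAt).comp y h0 |>.congr_deriv (mul_one _)
  have hB' : HasDerivAt (fun t => B (t + 2 * y)) (deriv B (x + 2 * y)) x := by
    have h0 : HasDerivAt (fun t : ℝ => t + 2 * y) 1 x := by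
      exact (hasDerivAt_id' x).add_const (2 * y)
    exact ((hB.differentiable (by simp) (x + 2 * y)).hasDerivAt).comp x h0 |>.congr_deriv (mul_one _)
  have hsq1 : HasDerivAt (fun t => α (x, t) ^ 2 / 2) (a * ay) y := by
    have := ((hasDerivAt_snd' hdiff x y).pow 2).div_const 2
    refine this.congr_deriv ?_
    simp [ha, hay]; ring
  have hsq2 : HasDerivAt (fun t => α (t, y) ^ 2 / 2) (a * ax) x := by
    have := ((hasDerivAt_fst' hdiff x y).pow 2).div_const 2
    refine this.congr_deriv ?_
    simp [ha, hax]; ring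
  have key1 : fderiv ℝ (fderiv ℝ α) (x, y) (0, 1) (1, 0)
      = deriv A (2 * x + y) - a * ay := hΦ1.unique (hA'.sub hsq1)
  have key2 : fderiv ℝ (fderiv ℝ α) (x, y) (1, 0) (0, 1)
      = deriv B (x + 2 * y) + a * ax := hΦ2.unique (hB'.add hsq2)
  have hsymm : fderiv ℝ (fderiv ℝ α) (x, y) (0, 1) (1, 0)
      = fderiv ℝ (fderiv ℝ α) (x, y) (1, 0) (0, 1) :=
    second_derivative_symmetric (fun p => (hdiff p).hasFDerivAt)
      (hf' (x, y)).hasFDerivAt _ _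
  have hsum : ax + ay = A (2 * x + y) + B (x + 2 * y) := by
    have e1 := h1 x y
    have e2 := h2 x y
    rw [hpdx x y] at e1
    rw [hpdy x y] at e2
    rw [← hax] at e1; rw [← hay] at e2
    linarith
  have hmain : a * (A (2 * x + y) + B (x + 2 * y))
      = deriv A (2 * x + y) - deriv B (x + 2 * y) := by
    rw [← hsum]
    have := hsymm
    rw [key1, key2] at this
    ring_nf
    ring_nf at this
    linarith
  field_simp [hne x y]
  linarith [hmain]
end

section
/- Let A, B : ℝ → ℝ be C² with A″ − A² = c, B″ + B² = −c, (1/2)(A′)² − (1/3)A³ − cA = a and (1/2)(B′)² + (1/3)B³ + cB = b for constants a, b, c, and suppose A(t) + B(s) ≠ 0 for all s, t and the identity (A″(t) − B″(s))(A(t) + B(s)) − (A′(t)² − B′(s)²) = (A(t)+B(s))³/3 holds for all s, t. Then a = b. -/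
theorem residual_eq_two_mul_sub_of_conservation_laws {x y x' y' x'' y'' a b c : ℝ}
    (hx'' : x'' - x ^ 2 = c) (hy'' : y'' + y ^ 2 = -c)
    (hx' : (1 / 2) * x' ^ 2 - (1 / 3) * x ^ 3 - c * x = a)
    (hy' : (1 / 2) * y' ^ 2 + (1 / 3) * y ^ 3 + c * y = b) :
    (x'' - y'') * (x + y) - (x' ^ 2 - y' ^ 2) - (x + y) ^ 3 / 3 = 2 * (b - a) := by
  linear_combination (x + y) * hx'' - (x + y) * hy'' - 2 * hx' + 2 * hy'

theorem stmt18_general (A B : ℝ → ℝ)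
    (a b c : ℝ)
    (hA2 : ∀ t : ℝ, deriv (deriv A) t - A t ^ 2 = c)
    (hB2 : ∀ s : ℝ, deriv (deriv B) s + B s ^ 2 = -c)
    (hAa : ∀ t : ℝ, (1 / 2) * (deriv A t) ^ 2 - (1 / 3) * A t ^ 3 - c * A t = a)
    (hBb : ∀ s : ℝ, (1 / 2) * (deriv B s) ^ 2 + (1 / 3) * B s ^ 3 + c * B s = b)
    (h10 : ∀ s t : ℝ,
      (deriv (deriv A) t - deriv (deriv B) s) * (A t + B s)
        - ((deriv A t) ^ 2 - (deriv B s) ^ 2) = (A t + B s) ^ 3 / 3) :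
    a = b := by
  have residual :=
    residual_eq_two_mul_sub_of_conservation_laws (hA2 0) (hB2 0) (hAa 0) (hBb 0)
  linarith [h10 0 0]

theorem stmt18 (A B : ℝ → ℝ) (hA : ContDiff ℝ 2 A) (hB : ContDiff ℝ 2 B)
    (a b c : ℝ)
    (hA2 : ∀ t : ℝ, deriv (deriv A) t - A t ^ 2 = c)
    (hB2 : ∀ s : ℝ, deriv (deriv B) s + B s ^ 2 = -c)
    (hAa : ∀ t : ℝ, (1 / 2) * (deriv A t) ^ 2 - (1 / 3) * A t ^ 3 - c * A t = a)
    (hBb : ∀ s : ℝ, (1 / 2) * (deriv B s) ^ 2 + (1 / 3) * B s ^ 3 + c * B s = b)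
    (hne : ∀ s t : ℝ, A t + B s ≠ 0)
    (h10 : ∀ s t : ℝ,
      (deriv (deriv A) t - deriv (deriv B) s) * (A t + B s)
        - ((deriv A t) ^ 2 - (deriv B s) ^ 2) = (A t + B s) ^ 3 / 3) :
    a = b :=
  stmt18_general A B a b c hA2 hB2 hAa hBb h10
end
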